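/- arXiv:2603.27009 — 2 statements merged into one kernel-verified Lean document; each statement's English description precedes it below -/
import Mathlib

section
/- For any point c in an open bounded convex set Ω and any r ≥ 0, the closed Hilbert ball B(c,r) is a compact subset of Ω; in particular, the Hilbert metric space (Ω, d_Ω) is proper. -/
noncomputable section
open Classical

abbrev V2 := EuclideanSpace ℝ (Fin 2)

/-- The Hilbert distance on `Ω`: for distinct `p q` with chord endpoints `x`
(beyond `p`) and `y` (beyond `q`) on the frontier of `Ω`, it is
`(1/2) * log ((‖x−q‖·‖y−p‖)/(‖x−p‖·‖y−q‖))`; otherwise `0`. -/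
noncomputable def hilbertDist (Ω : Set V2) (p q : V2) : ℝ :=
  if h : ∃ x y : V2, x ∈ frontier Ω ∧ y ∈ frontier Ω ∧
      p ∈ openSegment ℝ x q ∧ q ∈ openSegment ℝ p y then
    (1/2) * Real.log ((dist h.choose q * dist h.choose_spec.choose p) /
      (dist h.choose p * dist h.choose_spec.choose q))
  else 0

/-!
For `r ≥ 0` the closed Hilbert ball of radius `r` about `c` is `chordBall Ω c r`: the set of `p`
admitting frontier points `x`, `y` with `x, c, p, y` in this order on a line and
`|xp|·|yc| ≤ e^{2r}·|xc|·|yp|`. The two descriptions agree because, by convexity, a ray from an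
interior point meets the frontier only once, so `x` and `y` are the chord endpoints chosen in
`hilbertDist`. All conditions defining `chordBall` are closed and `x`, `y` range over the compact
frontier, so `chordBall Ω c r` is closed. It lies in `Ω`, hence is bounded: the inequality rules out
`y = p`, so `p` lies strictly between the interior point `c` and `y ∈ closure Ω`.
-/

open Set Bornology Metric

theorem IsPreconnected.inter_frontier_nonempty {X : Type*} [TopologicalSpace X] {s t : Set X}
    (hs : IsPreconnected s) (hst : (s ∩ t).Nonempty) (hs't : (s \ t).Nonempty) :
    (s ∩ frontier t).Nonempty := by
  by_contra h
  have hcover : s ⊆ interior t ∪ (closure t)ᶜ := fun x hx => by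
    by_cases hxi : x ∈ interior t
    · exact Or.inl hxi
    · exact Or.inr fun hxc => h ⟨x, hx, hxc, hxi⟩
  have hmeet_int : (s ∩ interior t).Nonempty := by
    obtain ⟨x, hxs, hxt⟩ := hst
    exact ⟨x, hxs, (hcover hxs).resolve_right (not_not.2 (subset_closure hxt))⟩
  have hmeet_ext : (s ∩ (closure t)ᶜ).Nonempty := by
    obtain ⟨x, hxs, hxt⟩ := hs't
    exact ⟨x, hxs, (hcover hxs).resolve_left fun hxi => hxt (interior_subset hxi)⟩
  obtain ⟨x, -, hxi, hxc⟩ := hs _ _ isOpen_interior isClosed_closure.isOpen_compl hcover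
    hmeet_int hmeet_ext
  exact hxc (interior_subset_closure hxi)

theorem IsCompact.isClosed_setOf_exists {X Y : Type*} [TopologicalSpace X] [TopologicalSpace Y]
    {K : Set X} (hK : IsCompact K) {P : X → Y → Prop} (hP : IsClosed {q : X × Y | P q.1 q.2}) :
    IsClosed {y | ∃ x ∈ K, P x y} := by
  have : CompactSpace K := isCompact_iff_compactSpace.mp hK
  have hproj : {y | ∃ x ∈ K, P x y} = Prod.snd '' {q : K × Y | P q.1 q.2} := by
    ext y; simp
  rw [hproj]
  exact isClosedMap_snd_of_compactSpace _
    (hP.preimage (continuous_subtype_val.prodMap continuous_id))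

section Chords

variable {E : Type*} [NormedAddCommGroup E] [NormedSpace ℝ E] {Ω : Set E}

theorem exists_mem_frontier_mem_openSegment (hΩb : IsBounded Ω) {a b : E}
    (hb : b ∈ interior Ω) (hab : a ≠ b) : ∃ y ∈ frontier Ω, b ∈ openSegment ℝ a y := by
  set f := AffineMap.lineMap (k := ℝ) a b
  have hray : IsPreconnected (f '' Ici 1) :=
    isPreconnected_Ici.image f (AffineMap.lineMap_continuous.continuousOn)
  have hleaves : (f '' Ici 1 \ Ω).Nonempty := by
    obtain ⟨R, hR⟩ := hΩb.subset_closedBall a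
    set t := max 1 ((R + 1) / dist a b)
    have hdist : R < dist (f t) a := by
      have hab' : 0 < dist a b := dist_pos.2 hab
      rw [dist_lineMap_left, Real.norm_of_nonneg (by positivity), ← div_lt_iff₀ hab']
      exact (div_lt_div_of_pos_right (lt_add_one R) hab').trans_le (le_max_right _ _)
    exact ⟨f t, mem_image_of_mem f (mem_Ici.2 (le_max_left _ _)), fun h => (hR h).not_gt hdist⟩
  obtain ⟨_, ⟨t, ht, rfl⟩, hft⟩ := hray.inter_frontier_nonempty
    ⟨b, ⟨1, mem_Ici.2 le_rfl, AffineMap.lineMap_apply_one a b⟩, interior_subset hb⟩ hleaves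
  have ht1 : 1 < t := by
    refine lt_of_le_of_ne ht fun h => hft.2 ?_
    rwa [← h, AffineMap.lineMap_apply_one]
  refine ⟨f t, hft, ?_⟩
  rw [openSegment_eq_image']
  refine ⟨1 / t, ⟨by positivity, (div_lt_one (by linarith)).2 ht1⟩, ?_⟩
  simp only [f, AffineMap.lineMap_apply, vsub_eq_sub, vadd_eq_add]
  match_scalars <;> field_simp
  ring

theorem exists_pos_eq_add_smul_sub_of_mem_openSegment {c x w : E}
    (h : c ∈ openSegment ℝ x w) : ∃ t : ℝ, 0 < t ∧ x = c + t • (c - w) := by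
  rw [openSegment_eq_image'] at h
  obtain ⟨θ, ⟨hθ0, hθ1⟩, rfl⟩ := h
  refine ⟨θ / (1 - θ), div_pos hθ0 (sub_pos.2 hθ1), ?_⟩
  have : 1 - θ ≠ 0 := (sub_pos.2 hθ1).ne'
  match_scalars <;> field_simp <;> ring

theorem Convex.add_smul_eq_of_add_smul_mem_frontier (hΩc : Convex ℝ Ω) {c v : E}
    (hc : c ∈ interior Ω) {s t : ℝ} (hs : 0 < s) (ht : 0 < t)
    (hsf : c + s • v ∈ frontier Ω) (htf : c + t • v ∈ frontier Ω) :
    c + s • v = c + t • v := by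
  wlog hst : s ≤ t generalizing s t
  · exact (this ht hs htf hsf (le_of_not_ge hst)).symm
  rcases hst.eq_or_lt with rfl | hst
  · rfl
  refine absurd ?_ hsf.2
  refine hΩc.openSegment_interior_closure_subset_interior hc (frontier_subset_closure htf) ?_
  rw [openSegment_eq_image']
  refine ⟨s / t, ⟨by positivity, (div_lt_one ht).2 hst⟩, ?_⟩
  simp only [add_sub_cancel_left, smul_smul, div_mul_cancel₀ s ht.ne']

theorem Convex.eq_of_mem_frontier_of_mem_openSegment (hΩc : Convex ℝ Ω) {c w x₁ x₂ : E}
    (hc : c ∈ interior Ω) (hx₁ : x₁ ∈ frontier Ω) (hx₂ : x₂ ∈ frontier Ω)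
    (h₁ : c ∈ openSegment ℝ x₁ w) (h₂ : c ∈ openSegment ℝ x₂ w) : x₁ = x₂ := by
  obtain ⟨s, hs, rfl⟩ := exists_pos_eq_add_smul_sub_of_mem_openSegment h₁
  obtain ⟨t, ht, rfl⟩ := exists_pos_eq_add_smul_sub_of_mem_openSegment h₂
  exact hΩc.add_smul_eq_of_add_smul_mem_frontier hc hs ht hx₁ hx₂

def chordBall (Ω : Set E) (c : E) (r : ℝ) : Set E :=
  {p | ∃ x ∈ frontier Ω, ∃ y ∈ frontier Ω, c ∈ segment ℝ x p ∧ p ∈ segment ℝ c y ∧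
    dist x p * dist y c ≤ Real.exp (2 * r) * (dist x c * dist y p)}

theorem isClosed_chordBall [StrictConvexSpace ℝ E] [ProperSpace E] (hΩb : IsBounded Ω)
    (c : E) (r : ℝ) : IsClosed (chordBall Ω c r) := by
  have hF : IsCompact (frontier Ω) :=
    hΩb.isCompact_closure.of_isClosed_subset isClosed_frontier frontier_subset_closure
  have hchord : chordBall Ω c r = {p | ∃ z ∈ frontier Ω ×ˢ frontier Ω,
      dist z.1 c + dist c p = dist z.1 p ∧ dist c p + dist p z.2 = dist c z.2 ∧
      dist z.1 p * dist z.2 c ≤ Real.exp (2 * r) * (dist z.1 c * dist z.2 p)} := by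
    ext p
    simp only [chordBall, mem_segment_iff_wbtw, ← dist_add_dist_eq_iff,
      Prod.exists, mem_prod, and_assoc, exists_and_left]
  rw [hchord]
  refine (hF.prod hF).isClosed_setOf_exists ?_
  simp only [ofPred_and]
  refine (isClosed_eq ?_ ?_).inter ((isClosed_eq ?_ ?_).inter (isClosed_le ?_ ?_)) <;> fun_prop

theorem Convex.chordBall_subset_interior (hΩc : Convex ℝ Ω) {c : E} (hc : c ∈ interior Ω)
    (r : ℝ) : chordBall Ω c r ⊆ interior Ω := by
  rintro p ⟨x, -, y, hy, hcx, hpy, hbound⟩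
  by_contra hp
  have hpc : p ≠ c := fun h => hp (h ▸ hc)
  have hxp : x ≠ p := by
    rintro rfl
    rw [segment_same] at hcx
    exact hpc hcx.symm
  have hyc : y ≠ c := fun h => hy.2 (h ▸ hc)
  have hyp : y ≠ p := by
    rintro rfl
    have : 0 < dist x y * dist y c := mul_pos (dist_pos.2 hxp) (dist_pos.2 hyc)
    simp only [dist_self, mul_zero] at hbound
    linarith
  exact hp (hΩc.openSegment_interior_closure_subset_interior hc (frontier_subset_closure hy)
    (mem_openSegment_of_ne_left_right hpc.symm hyp hpy))

end Chords

theorem half_mul_log_div_le_iff {A B r : ℝ} (hA : 0 < A) (hB : 0 < B) :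
    1 / 2 * Real.log (A / B) ≤ r ↔ A ≤ Real.exp (2 * r) * B := by
  rw [← div_le_iff₀ hB, ← Real.log_le_iff_le_exp (div_pos hA hB)]
  constructor <;> intro h <;> linarith

theorem IsOpen.ne_of_mem_frontier {X : Type*} [TopologicalSpace X] {s : Set X} (hs : IsOpen s)
    {x y : X} (hx : x ∈ frontier s) (hy : y ∈ s) : x ≠ y :=
  fun h => (disjoint_frontier_iff_isOpen.2 hs).notMem_of_mem_left hx (h ▸ hy)

section HilbertDist

variable {Ω : Set V2} {c p : V2}

theorem hilbertDist_self (hΩo : IsOpen Ω) (hc : c ∈ Ω) : hilbertDist Ω c c = 0 := by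
  rw [hilbertDist, dif_neg]
  rintro ⟨x, -, hx, -, hcx, -⟩
  rw [right_mem_openSegment_iff] at hcx
  exact hΩo.ne_of_mem_frontier hx hc hcx

theorem hilbertDist_eq_of_mem_frontier (hΩo : IsOpen Ω) (hΩc : Convex ℝ Ω) (hc : c ∈ Ω)
    (hp : p ∈ Ω) {x y : V2} (hx : x ∈ frontier Ω) (hy : y ∈ frontier Ω)
    (hcx : c ∈ openSegment ℝ x p) (hpy : p ∈ openSegment ℝ c y) :
    hilbertDist Ω c p = 1 / 2 * Real.log (dist x p * dist y c / (dist x c * dist y p)) := by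
  have h : ∃ x y : V2, x ∈ frontier Ω ∧ y ∈ frontier Ω ∧
      c ∈ openSegment ℝ x p ∧ p ∈ openSegment ℝ c y := ⟨x, y, hx, hy, hcx, hpy⟩
  obtain ⟨hx', hy', hcx', hpy'⟩ := h.choose_spec.choose_spec
  rw [openSegment_symm] at hpy hpy'
  rw [hilbertDist, dif_pos h,
    hΩc.eq_of_mem_frontier_of_mem_openSegment (hΩo.interior_eq.symm ▸ hp) hy' hy hpy' hpy,
    hΩc.eq_of_mem_frontier_of_mem_openSegment (hΩo.interior_eq.symm ▸ hc) hx' hx hcx' hcx]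

theorem hilbertDist_le_iff_mem_chordBall (hΩo : IsOpen Ω) (hΩb : IsBounded Ω)
    (hΩc : Convex ℝ Ω) (hc : c ∈ Ω) (hp : p ∈ Ω) {r : ℝ} (hr : 0 ≤ r) :
    hilbertDist Ω c p ≤ r ↔ p ∈ chordBall Ω c r := by
  rcases eq_or_ne p c with rfl | hpc
  · obtain ⟨a, hap⟩ := exists_ne p
    obtain ⟨x, hx, -⟩ := exists_mem_frontier_mem_openSegment hΩb (hΩo.interior_eq.symm ▸ hp) hap
    refine iff_of_true (hilbertDist_self hΩo hp ▸ hr)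
      ⟨x, hx, x, hx, right_mem_segment _ _ _, left_mem_segment _ _ _, ?_⟩
    exact le_mul_of_one_le_left (by positivity) (Real.one_le_exp (by positivity))
  have hpos : ∀ {z q : V2}, z ∈ frontier Ω → q ∈ Ω → 0 < dist z q :=
    fun hz hq => dist_pos.2 (hΩo.ne_of_mem_frontier hz hq)
  constructor
  · intro hd
    obtain ⟨x, hx, hcx⟩ :=
      exists_mem_frontier_mem_openSegment hΩb (hΩo.interior_eq.symm ▸ hc) hpc
    obtain ⟨y, hy, hpy⟩ :=
      exists_mem_frontier_mem_openSegment hΩb (hΩo.interior_eq.symm ▸ hp) hpc.symm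
    rw [openSegment_symm] at hcx
    rw [hilbertDist_eq_of_mem_frontier hΩo hΩc hc hp hx hy hcx hpy,
      half_mul_log_div_le_iff (mul_pos (hpos hx hp) (hpos hy hc))
        (mul_pos (hpos hx hc) (hpos hy hp))] at hd
    exact ⟨x, hx, y, hy, openSegment_subset_segment _ _ _ hcx,
      openSegment_subset_segment _ _ _ hpy, hd⟩
  · rintro ⟨x, hx, y, hy, hcx, hpy, hbound⟩
    have hcx' := mem_openSegment_of_ne_left_right (hΩo.ne_of_mem_frontier hx hc) hpc hcx
    have hpy' := mem_openSegment_of_ne_left_right hpc.symm (hΩo.ne_of_mem_frontier hy hp) hpy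
    rwa [hilbertDist_eq_of_mem_frontier hΩo hΩc hc hp hx hy hcx' hpy',
      half_mul_log_div_le_iff (mul_pos (hpos hx hp) (hpos hy hc))
        (mul_pos (hpos hx hc) (hpos hy hp))]

end HilbertDist

/-- Closed Hilbert balls are compact subsets of `Ω`; the Hilbert metric space is proper. -/
theorem hilbert_closedBall_compact (Ω : Set V2) (hΩo : IsOpen Ω)
    (hΩb : Bornology.IsBounded Ω) (hΩc : Convex ℝ Ω)
    (c : V2) (hc : c ∈ Ω) (r : ℝ) (hr : 0 ≤ r) :
    IsCompact {p ∈ Ω | hilbertDist Ω c p ≤ r} ∧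
    {p ∈ Ω | hilbertDist Ω c p ≤ r} ⊆ Ω := by
  have hsub : chordBall Ω c r ⊆ Ω :=
    (hΩc.chordBall_subset_interior (hΩo.interior_eq.symm ▸ hc) r).trans interior_subset
  have hball : {p ∈ Ω | hilbertDist Ω c p ≤ r} = chordBall Ω c r := by
    ext p
    exact ⟨fun ⟨hp, hd⟩ => (hilbertDist_le_iff_mem_chordBall hΩo hΩb hΩc hc hp hr).1 hd,
      fun h => ⟨hsub h, (hilbertDist_le_iff_mem_chordBall hΩo hΩb hΩc hc (hsub h) hr).2 h⟩⟩
  rw [hball]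
  exact ⟨isCompact_of_isClosed_isBounded (isClosed_chordBall hΩb c r) (hΩb.subset hsub), hsub⟩
end
end

section
/- In the Hilbert metric on an open bounded convex set Ω, every first-order Voronoi cell is star-shaped with respect to its site: for every point p in the cell of site s, the entire Euclidean segment from s to p lies in the cell. -/
/-!
For `p ≠ q` in `Ω`, let `p + β • (q - p)` be the point where the ray from `p` through `q` leaves
`Ω`. The Funk distance from `p` to `q` is `log (β / (β - 1))`, and the Hilbert distance is the
average of the Funk distances in both directions. Funk distances add up along segments, and
they satisfy the triangle inequality: the segment joining the exit points of the rays `a → b`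
and `b → c` lies in `closure Ω` and crosses the ray `a → c` at parameter `αβ / (α + β - 1)`,
whose Funk value is exactly the sum (Menelaus). Hence for `z ∈ [s, p]` and another site `s'`,
`d(z, s) = d(p, s) - d(p, z) < d(p, s') - d(p, z) ≤ d(z, s')`.
-/

noncomputable section
open Classical

open Topology

/-- If the ray from `p` through `q` leaves `Ω` at `y = p + β • (q - p)`, then the Funk distance
from `p` to `q` is `log (‖y - p‖ / ‖y - q‖) = funkOfExit β`. -/
def funkOfExit (β : ℝ) : ℝ := Real.log (β / (β - 1))

theorem funkOfExit_pos {β : ℝ} (hβ : 1 < β) : 0 < funkOfExit β :=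
  Real.log_pos <| (one_lt_div (by linarith)).2 (by linarith)

theorem funkOfExit_le_of_le {β γ : ℝ} (hβ : 1 < β) (hβγ : β ≤ γ) :
    funkOfExit γ ≤ funkOfExit β := by
  apply Real.log_le_log (div_pos (by linarith) (by linarith))
  rw [div_le_div_iff₀ (by linarith) (by linarith)]
  nlinarith

theorem funkOfExit_compose {α β : ℝ} (hα : 1 < α) (hβ : 1 < β) :
    funkOfExit (α * β / (α + β - 1)) = funkOfExit α + funkOfExit β := by
  have hd : 0 < α + β - 1 := by linarith
  have hα' : α - 1 ≠ 0 := by linarith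
  have hβ' : β - 1 ≠ 0 := by linarith
  rw [funkOfExit, funkOfExit, funkOfExit, ← Real.log_mul (by positivity) (by positivity)]
  have hsub : α * β / (α + β - 1) - 1 = (α - 1) * (β - 1) / (α + β - 1) := by
    field_simp; ring
  rw [hsub, div_div_div_cancel_right₀ hd.ne', div_mul_div_comm]

theorem funkOfExit_div_add {B t : ℝ} (hB : 1 < B) (ht0 : 0 < t) (ht1 : t < 1) :
    funkOfExit (B / t) + funkOfExit ((B - t) / (1 - t)) = funkOfExit B := by
  have h1t : 0 < 1 - t := by linarith
  have hBt : B - t ≠ 0 := by linarith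
  rw [← funkOfExit_compose ((one_lt_div ht0).2 (by linarith)) ((one_lt_div h1t).2 (by linarith))]
  have hden : B / t + (B - t) / (1 - t) - 1 = (B - t) / (t * (1 - t)) := by
    field_simp; ring
  congr 1
  rw [hden]
  field_simp

section Affine

variable {E : Type*} [AddCommGroup E] [Module ℝ E]

theorem mem_openSegment_iff_exists_one_lt {x p q : E} :
    p ∈ openSegment ℝ x q ↔ ∃ α : ℝ, 1 < α ∧ x = q + α • (p - q) := by
  constructor
  · rintro ⟨u, w, hu, hw, huw, rfl⟩
    refine ⟨u⁻¹, (one_lt_inv₀ hu).2 (by linarith), ?_⟩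
    obtain rfl : w = 1 - u := by linarith
    rw [show u • x + (1 - u) • q - q = u • (x - q) by module, smul_smul, inv_mul_cancel₀ hu.ne',
      one_smul, add_sub_cancel]
  · rintro ⟨α, hα, rfl⟩
    have hα0 : 0 < α := by linarith
    refine ⟨α⁻¹, 1 - α⁻¹, inv_pos.2 hα0, sub_pos.2 (inv_lt_one_of_one_lt₀ hα), by ring, ?_⟩
    rw [smul_add, smul_smul, inv_mul_cancel₀ hα0.ne']
    module

/-- Funk distances add up along a segment: for `z = a + s • (b - a)`, the exit point
`a + B • (b - a)` of the ray `a → b` is also the exit point of the rays `a → z` and `z → b`. -/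
theorem exists_funkOfExit_split {a b : E} {B s : ℝ} (hB : 1 < B) (hs0 : 0 < s) (hs1 : s < 1) :
    ∃ β₁ β₂ : ℝ, 1 < β₁ ∧ 1 < β₂ ∧ a + β₁ • ((a + s • (b - a)) - a) = a + B • (b - a) ∧
      (a + s • (b - a)) + β₂ • (b - (a + s • (b - a))) = a + B • (b - a) ∧
      funkOfExit β₁ + funkOfExit β₂ = funkOfExit B := by
  have h1s : 1 - s ≠ 0 := by linarith
  refine ⟨B / s, (B - s) / (1 - s), (one_lt_div hs0).2 (by linarith),
    (one_lt_div (by linarith)).2 (by linarith), ?_, ?_, funkOfExit_div_add hB hs0 hs1⟩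
  · rw [add_sub_cancel_left, smul_smul, div_mul_cancel₀ B hs0.ne']
  · rw [show b - (a + s • (b - a)) = (1 - s) • (b - a) by module, smul_smul,
      div_mul_cancel₀ _ h1s]
    module

end Affine

section Normed

variable {E : Type*} [NormedAddCommGroup E] [NormedSpace ℝ E]

theorem dist_add_smul_sub_left (p q : E) (α : ℝ) : dist (q + α • (p - q)) q = |α| * dist p q := by
  rw [dist_eq_norm, add_sub_cancel_left, norm_smul, Real.norm_eq_abs, dist_eq_norm]

theorem dist_add_smul_sub_right (p q : E) (α : ℝ) :
    dist (q + α • (p - q)) p = |α - 1| * dist p q := by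
  rw [dist_eq_norm, show q + α • (p - q) - p = (α - 1) • (p - q) by module, norm_smul,
    Real.norm_eq_abs, dist_eq_norm]

theorem half_log_crossRatio_eq {p q : E} (hpq : p ≠ q) {α β : ℝ} (hα : 1 < α) (hβ : 1 < β) :
    1 / 2 * Real.log (dist (q + α • (p - q)) q * dist (p + β • (q - p)) p /
      (dist (q + α • (p - q)) p * dist (p + β • (q - p)) q)) =
      (funkOfExit α + funkOfExit β) / 2 := by
  have hd : 0 < dist p q := dist_pos.2 hpq
  rw [dist_add_smul_sub_left, dist_add_smul_sub_left, dist_add_smul_sub_right,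
    dist_add_smul_sub_right, dist_comm q p, abs_of_pos (by linarith : 0 < α),
    abs_of_pos (by linarith : 0 < β), abs_of_pos (by linarith : 0 < α - 1),
    abs_of_pos (by linarith : 0 < β - 1)]
  have hratio : α * dist p q * (β * dist p q) / ((α - 1) * dist p q * ((β - 1) * dist p q)) =
      α / (α - 1) * (β / (β - 1)) := by
    field_simp
  rw [hratio, Real.log_mul (div_pos (by linarith) (by linarith)).ne'
    (div_pos (by linarith) (by linarith)).ne', funkOfExit, funkOfExit]
  ring

variable {Ω : Set E}

theorem ray_param_le_of_mem_frontier (hΩo : IsOpen Ω) (hΩc : Convex ℝ Ω) {c v : E}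
    (hc : c ∈ Ω) {t t' : ℝ} (ht' : 0 < t') (h : c + t • v ∈ closure Ω)
    (h' : c + t' • v ∈ frontier Ω) : t ≤ t' := by
  by_contra! htt'
  have ht : 0 < t := ht'.trans htt'
  have hseg : c + t' • v ∈ openSegment ℝ c (c + t • v) := by
    refine ⟨1 - t' / t, t' / t, by rw [sub_pos, div_lt_one ht]; exact htt',
      div_pos ht' ht, by ring, ?_⟩
    match_scalars
    · field_simp; ring
    · field_simp
  have := hΩc.openSegment_interior_closure_subset_interior (by rwa [hΩo.interior_eq]) h hseg
  rw [hΩo.interior_eq] at this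
  exact (hΩo.inter_frontier_eq.subset ⟨this, h'⟩).elim

theorem ray_param_eq_of_mem_frontier (hΩo : IsOpen Ω) (hΩc : Convex ℝ Ω) {c v : E}
    (hc : c ∈ Ω) {t t' : ℝ} (ht : 0 < t) (ht' : 0 < t') (h : c + t • v ∈ frontier Ω)
    (h' : c + t' • v ∈ frontier Ω) : t = t' :=
  le_antisymm (ray_param_le_of_mem_frontier hΩo hΩc hc ht' (frontier_subset_closure h) h')
    (ray_param_le_of_mem_frontier hΩo hΩc hc ht (frontier_subset_closure h') h)

/-- The exit parameter is the reciprocal of the gauge of `Ω - p` at `q - p`. -/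
theorem exists_one_lt_ray_param_mem_frontier (hΩo : IsOpen Ω) (hΩb : Bornology.IsBounded Ω)
    (hΩc : Convex ℝ Ω) {p q : E} (hp : p ∈ Ω) (hq : q ∈ Ω) (hpq : p ≠ q) :
    ∃ β : ℝ, 1 < β ∧ p + β • (q - p) ∈ frontier Ω := by
  let U := (p + ·) ⁻¹' Ω
  have hUo : IsOpen U := hΩo.preimage (continuous_const_add p)
  have hU0 : U ∈ 𝓝 0 := hUo.mem_nhds (by simpa [U])
  have hUb : Bornology.IsVonNBounded ℝ U :=
    (NormedSpace.isVonNBounded_iff ℝ).2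
      ((IsometryEquiv.addLeft p).isometry.antilipschitz.isBounded_preimage hΩb)
  have hg0 : 0 < gauge U (q - p) :=
    (gauge_pos (absorbent_nhds_zero hU0) hUb).2 (sub_ne_zero.2 hpq.symm)
  have hg1 : gauge U (q - p) < 1 := gauge_lt_one_of_mem_of_isOpen hUo (by simpa [U])
  refine ⟨(gauge U (q - p))⁻¹, (one_lt_inv₀ hg0).2 hg1, ?_⟩
  have : (gauge U (q - p))⁻¹ • (q - p) ∈ frontier U := by
    rw [← gauge_eq_one_iff_mem_frontier (hΩc.translate_preimage_right p) hU0,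
      gauge_smul_of_nonneg (inv_nonneg.2 hg0.le), smul_eq_mul, inv_mul_cancel₀ hg0.ne']
  rwa [show frontier U = (p + ·) ⁻¹' frontier Ω from
    ((Homeomorph.addLeft p).preimage_frontier Ω).symm] at this

theorem funkOfExit_le_add (hΩo : IsOpen Ω) (hΩc : Convex ℝ Ω) {a b c : E} (ha : a ∈ Ω)
    {α β γ : ℝ} (hα : 1 < α) (hβ : 1 < β) (hγ : 1 < γ)
    (hab : a + α • (b - a) ∈ frontier Ω) (hbc : b + β • (c - b) ∈ frontier Ω)
    (hac : a + γ • (c - a) ∈ frontier Ω) :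
    funkOfExit γ ≤ funkOfExit α + funkOfExit β := by
  have hd : 0 < α + β - 1 := by linarith
  have hseg : a + (α * β / (α + β - 1)) • (c - a) ∈
      segment ℝ (a + α • (b - a)) (b + β • (c - b)) := by
    refine ⟨(β - 1) / (α + β - 1), α / (α + β - 1), div_nonneg (by linarith) hd.le,
      div_nonneg (by linarith) hd.le, by field_simp; ring, ?_⟩
    match_scalars <;> field_simp <;> ring
  have hmem := hΩc.closure.segment_subset (frontier_subset_closure hab)
    (frontier_subset_closure hbc) hseg
  rw [← funkOfExit_compose hα hβ]
  refine funkOfExit_le_of_le ?_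
    (ray_param_le_of_mem_frontier hΩo hΩc ha (by linarith) hmem hac)
  rw [lt_div_iff₀ hd]
  nlinarith

end Normed

theorem hilbertDist_self_s14 (Ω : Set V2) (p : V2) : hilbertDist Ω p p = 0 := by
  rw [hilbertDist]
  split_ifs <;> simp only [Real.log_div_self, mul_zero]

theorem hilbertDist_eq_funkOfExit {Ω : Set V2} (hΩo : IsOpen Ω) (hΩc : Convex ℝ Ω) {p q : V2}
    (hp : p ∈ Ω) (hq : q ∈ Ω) (hpq : p ≠ q) {α β : ℝ} (hα : 1 < α) (hβ : 1 < β)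
    (hx : q + α • (p - q) ∈ frontier Ω) (hy : p + β • (q - p) ∈ frontier Ω) :
    hilbertDist Ω p q = (funkOfExit α + funkOfExit β) / 2 := by
  have hex : ∃ x y : V2, x ∈ frontier Ω ∧ y ∈ frontier Ω ∧
      p ∈ openSegment ℝ x q ∧ q ∈ openSegment ℝ p y :=
    ⟨_, _, hx, hy, mem_openSegment_iff_exists_one_lt.2 ⟨α, hα, rfl⟩,
      openSegment_symm ℝ p _ ▸ mem_openSegment_iff_exists_one_lt.2 ⟨β, hβ, rfl⟩⟩
  rw [hilbertDist, dif_pos hex]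
  obtain ⟨hx₀, hy₀, hpx₀, hqy₀⟩ := hex.choose_spec.choose_spec
  generalize hex.choose_spec.choose = y₀ at *
  generalize hex.choose = x₀ at *
  obtain ⟨α₀, hα₀, rfl⟩ := mem_openSegment_iff_exists_one_lt.1 hpx₀
  obtain ⟨β₀, hβ₀, rfl⟩ := mem_openSegment_iff_exists_one_lt.1 (openSegment_symm ℝ p _ ▸ hqy₀)
  obtain rfl : α = α₀ := ray_param_eq_of_mem_frontier hΩo hΩc hq (by linarith) (by linarith) hx hx₀
  obtain rfl : β = β₀ := ray_param_eq_of_mem_frontier hΩo hΩc hp (by linarith) (by linarith) hy hy₀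
  exact half_log_crossRatio_eq hpq hα hβ

section HilbertMetric

variable {Ω : Set V2} (hΩo : IsOpen Ω) (hΩb : Bornology.IsBounded Ω) (hΩc : Convex ℝ Ω)
include hΩo hΩb hΩc

theorem hilbertDist_nonneg {p q : V2} (hp : p ∈ Ω) (hq : q ∈ Ω) : 0 ≤ hilbertDist Ω p q := by
  rcases eq_or_ne p q with rfl | hpq
  · rw [hilbertDist_self_s14]
  obtain ⟨α, hα, hx⟩ := exists_one_lt_ray_param_mem_frontier hΩo hΩb hΩc hq hp hpq.symm
  obtain ⟨β, hβ, hy⟩ := exists_one_lt_ray_param_mem_frontier hΩo hΩb hΩc hp hq hpq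
  rw [hilbertDist_eq_funkOfExit hΩo hΩc hp hq hpq hα hβ hx hy]
  linarith [funkOfExit_pos hα, funkOfExit_pos hβ]

theorem hilbertDist_triangle {a b c : V2} (ha : a ∈ Ω) (hb : b ∈ Ω) (hc : c ∈ Ω) :
    hilbertDist Ω a c ≤ hilbertDist Ω a b + hilbertDist Ω b c := by
  rcases eq_or_ne a b with rfl | hab
  · rw [hilbertDist_self_s14, zero_add]
  rcases eq_or_ne b c with rfl | hbc
  · rw [hilbertDist_self_s14, add_zero]
  rcases eq_or_ne a c with rfl | hac
  · rw [hilbertDist_self_s14]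
    exact add_nonneg (hilbertDist_nonneg hΩo hΩb hΩc ha hb) (hilbertDist_nonneg hΩo hΩb hΩc hb ha)
  obtain ⟨α₁, hα₁, hx₁⟩ := exists_one_lt_ray_param_mem_frontier hΩo hΩb hΩc hb ha hab.symm
  obtain ⟨β₁, hβ₁, hy₁⟩ := exists_one_lt_ray_param_mem_frontier hΩo hΩb hΩc ha hb hab
  obtain ⟨α₂, hα₂, hx₂⟩ := exists_one_lt_ray_param_mem_frontier hΩo hΩb hΩc hc hb hbc.symm
  obtain ⟨β₂, hβ₂, hy₂⟩ := exists_one_lt_ray_param_mem_frontier hΩo hΩb hΩc hb hc hbc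
  obtain ⟨α₃, hα₃, hx₃⟩ := exists_one_lt_ray_param_mem_frontier hΩo hΩb hΩc hc ha hac.symm
  obtain ⟨β₃, hβ₃, hy₃⟩ := exists_one_lt_ray_param_mem_frontier hΩo hΩb hΩc ha hc hac
  rw [hilbertDist_eq_funkOfExit hΩo hΩc ha hb hab hα₁ hβ₁ hx₁ hy₁,
    hilbertDist_eq_funkOfExit hΩo hΩc hb hc hbc hα₂ hβ₂ hx₂ hy₂,
    hilbertDist_eq_funkOfExit hΩo hΩc ha hc hac hα₃ hβ₃ hx₃ hy₃]
  linarith [funkOfExit_le_add hΩo hΩc ha hβ₁ hβ₂ hβ₃ hy₁ hy₂ hy₃,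
    funkOfExit_le_add hΩo hΩc hc hα₂ hα₁ hα₃ hx₂ hx₁ hx₃]

theorem hilbertDist_add_of_mem_segment {p q z : V2} (hp : p ∈ Ω) (hq : q ∈ Ω)
    (hz : z ∈ segment ℝ p q) : hilbertDist Ω p z + hilbertDist Ω z q = hilbertDist Ω p q := by
  have hzΩ : z ∈ Ω := hΩc.segment_subset hp hq hz
  rw [segment_eq_image'] at hz
  obtain ⟨t, ⟨ht0, ht1⟩, rfl⟩ := hz
  beta_reduce at hzΩ ⊢
  rcases eq_or_ne p q with rfl | hpq
  · simp only [sub_self, smul_zero, add_zero, hilbertDist_self_s14]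
  rcases ht0.eq_or_lt with rfl | ht0
  · rw [zero_smul, add_zero, hilbertDist_self_s14, zero_add]
  rcases ht1.eq_or_lt with rfl | ht1
  · rw [one_smul, add_sub_cancel, hilbertDist_self_s14, add_zero]
  have hz' : p + t • (q - p) = q + (1 - t) • (p - q) := by module
  have hzp : p + t • (q - p) ≠ p := by simp [ht0.ne', sub_ne_zero.2 hpq.symm]
  have hzq : p + t • (q - p) ≠ q := by
    rw [hz']; simp [(by linarith : 1 - t ≠ 0), sub_ne_zero.2 hpq]
  obtain ⟨A, hA, hx⟩ := exists_one_lt_ray_param_mem_frontier hΩo hΩb hΩc hq hp hpq.symm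
  obtain ⟨B, hB, hy⟩ := exists_one_lt_ray_param_mem_frontier hΩo hΩb hΩc hp hq hpq
  obtain ⟨β₁, β₂, hβ₁, hβ₂, hyz, hzy, hβ⟩ := exists_funkOfExit_split (a := p) (b := q) hB ht0 ht1
  obtain ⟨α₁, α₂, hα₁, hα₂, hxz, hzx, hα⟩ :=
    exists_funkOfExit_split (a := q) (b := p) hA (by linarith : 0 < 1 - t) (by linarith)
  rw [← hz'] at hxz hzx
  rw [hilbertDist_eq_funkOfExit hΩo hΩc hp hzΩ hzp.symm hα₂ hβ₁ (hzx ▸ hx) (hyz ▸ hy),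
    hilbertDist_eq_funkOfExit hΩo hΩc hzΩ hq hzq hα₁ hβ₂ (hxz ▸ hx) (hzy ▸ hy),
    hilbertDist_eq_funkOfExit hΩo hΩc hp hq hpq hA hB hx hy]
  linarith

end HilbertMetric

/-- First-order Hilbert Voronoi cells are star-shaped with respect to their site. -/
theorem hilbert_voronoi_cell_starShaped (Ω : Set V2) (hΩo : IsOpen Ω)
    (hΩb : Bornology.IsBounded Ω) (hΩc : Convex ℝ Ω)
    (S : Finset V2) (hS : ↑S ⊆ Ω) (s : V2) (hs : s ∈ S)
    (p : V2)
    (hp : p ∈ {x ∈ Ω | ∀ s' ∈ S, s' ≠ s → hilbertDist Ω x s < hilbertDist Ω x s'}) :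
    segment ℝ s p ⊆ {x ∈ Ω | ∀ s' ∈ S, s' ≠ s → hilbertDist Ω x s < hilbertDist Ω x s'} := by
  obtain ⟨hpΩ, hp_closer⟩ := hp
  have hsΩ : s ∈ Ω := hS hs
  intro z hz
  have hzΩ : z ∈ Ω := hΩc.segment_subset hsΩ hpΩ hz
  refine ⟨hzΩ, fun s' hs' hne => ?_⟩
  have hgeod := hilbertDist_add_of_mem_segment hΩo hΩb hΩc hpΩ hsΩ (segment_symm ℝ s p ▸ hz)
  have htri := hilbertDist_triangle hΩo hΩb hΩc hpΩ hzΩ (hS hs')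
  linarith [hp_closer s' hs' hne]
end
end
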